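/- arXiv:1704.04465 — 4 statements merged into one kernel-verified Lean document; each statement's English description precedes it below -/
import Mathlib

section
/- The content placement game is an exact potential game with potential f: for every cache m, every profile B = (b^(m), b^(−m)) of feasible placements and every alternative feasible placement b̃^(m) for cache m, it holds that f^(m)(b̃^(m), b^(−m)) − f^(m)(b^(m), b^(−m)) = f(b̃^(m), b^(−m)) − f(b^(m), b^(−m)). -/
open Finset

/-- `qm p B m j` = Σ_{s ∋ m} p_s Π_{ℓ ∈ s \ {m}} (1 - b^(ℓ)_j). -/
noncomputable def qm {N J : ℕ} (p : Finset (Fin N) → ℝ) (B : Fin N → Fin J → ℝ)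
    (m : Fin N) (j : Fin J) : ℝ :=
  ∑ s ∈ Finset.univ.filter (fun s : Finset (Fin N) => m ∈ s),
    p s * ∏ ℓ ∈ s.erase m, (1 - B ℓ j)

/-- Miss probability f(B) = Σ_j a_j Σ_{s ≠ ∅} p_s Π_{ℓ ∈ s} (1 - b^(ℓ)_j). -/
noncomputable def missProb {N J : ℕ} (a : Fin J → ℝ) (p : Finset (Fin N) → ℝ)
    (B : Fin N → Fin J → ℝ) : ℝ :=
  ∑ j, a j * ∑ s ∈ Finset.univ.filter (fun s : Finset (Fin N) => s.Nonempty),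
    p s * ∏ ℓ ∈ s, (1 - B ℓ j)

/-- Local miss probability f^(m)(B) = Σ_j a_j (1 - b^(m)_j) q_m(j). -/
noncomputable def localMiss {N J : ℕ} (a : Fin J → ℝ) (p : Finset (Fin N) → ℝ)
    (B : Fin N → Fin J → ℝ) (m : Fin N) : ℝ :=
  ∑ j, a j * (1 - B m j) * qm p B m j

/-- A feasible placement: a 0/1 vector over the J files with exactly K ones. -/
def IsPlacement {J : ℕ} (K : ℕ) (b : Fin J → ℝ) : Prop :=
  (∀ j, b j = 0 ∨ b j = 1) ∧ ∑ j, b j = (K : ℝ)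

/-!
Splitting the users according to whether cache `m` covers them, `f = f^(m) + g`, where `g` is
the miss probability of the users outside the range of cache `m`. Since `g` does not involve
`b^(m)`, changing `b^(m)` changes `f` and `f^(m)` by the same amount.
-/

noncomputable def missProbAvoiding {N J : ℕ} (a : Fin J → ℝ) (p : Finset (Fin N) → ℝ)
    (B : Fin N → Fin J → ℝ) (m : Fin N) : ℝ :=
  ∑ j, a j * ∑ s ∈ univ.filter (fun s : Finset (Fin N) => s.Nonempty ∧ m ∉ s),
    p s * ∏ ℓ ∈ s, (1 - B ℓ j)

lemma sum_nonempty_eq_mul_qm_add {N J : ℕ} (p : Finset (Fin N) → ℝ)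
    (B : Fin N → Fin J → ℝ) (m : Fin N) (j : Fin J) :
    ∑ s ∈ univ.filter (fun s : Finset (Fin N) => s.Nonempty), p s * ∏ ℓ ∈ s, (1 - B ℓ j) =
      (1 - B m j) * qm p B m j +
        ∑ s ∈ univ.filter (fun s : Finset (Fin N) => s.Nonempty ∧ m ∉ s),
          p s * ∏ ℓ ∈ s, (1 - B ℓ j) := by
  rw [← sum_filter_add_sum_filter_not _ (fun s => m ∈ s), filter_filter, filter_filter]
  congr 1
  have hcover : univ.filter (fun s : Finset (Fin N) => s.Nonempty ∧ m ∈ s) =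
      univ.filter (fun s => m ∈ s) := by
    ext s
    simpa using fun h : m ∈ s => ⟨m, h⟩
  rw [hcover, qm, mul_sum]
  refine sum_congr rfl fun s hs => ?_
  rw [← mul_prod_erase s _ (mem_filter.1 hs).2]
  ring

lemma missProb_eq_localMiss_add_missProbAvoiding {N J : ℕ} (a : Fin J → ℝ)
    (p : Finset (Fin N) → ℝ) (B : Fin N → Fin J → ℝ) (m : Fin N) :
    missProb a p B = localMiss a p B m + missProbAvoiding a p B m := by
  simp only [missProb, localMiss, missProbAvoiding, sum_nonempty_eq_mul_qm_add p B m,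
    ← sum_add_distrib, mul_add, mul_assoc]

lemma missProbAvoiding_update_self {N J : ℕ} (a : Fin J → ℝ) (p : Finset (Fin N) → ℝ)
    (B : Fin N → Fin J → ℝ) (m : Fin N) (b : Fin J → ℝ) :
    missProbAvoiding a p (Function.update B m b) m = missProbAvoiding a p B m := by
  refine sum_congr rfl fun j _ => congrArg _ <| sum_congr rfl fun s hs => congrArg _ <|
    prod_congr rfl fun ℓ hℓ => ?_
  rw [Function.update_of_ne (ne_of_mem_of_not_mem hℓ (mem_filter.1 hs).2.2)]

theorem content_placement_exact_potential_general (N J : ℕ) (a : Fin J → ℝ)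
    (p : Finset (Fin N) → ℝ) (B : Fin N → Fin J → ℝ) (m : Fin N) (btilde : Fin J → ℝ) :
    localMiss a p (Function.update B m btilde) m - localMiss a p B m =
      missProb a p (Function.update B m btilde) - missProb a p B := by
  rw [missProb_eq_localMiss_add_missProbAvoiding a p _ m,
    missProb_eq_localMiss_add_missProbAvoiding a p B m, missProbAvoiding_update_self]
  ring

/-- the content placement game is an exact potential game with potential
the miss probability `missProb`. -/
theorem content_placement_exact_potential (N J K : ℕ) (hK1 : 1 ≤ K) (hKJ : K ≤ J)
    (a : Fin J → ℝ) (ha : ∀ j, 0 ≤ a j) (hasum : ∑ j, a j = 1)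
    (p : Finset (Fin N) → ℝ) (hp : ∀ s, 0 ≤ p s)
    (hpsum : ∑ s ∈ Finset.univ.filter (fun s : Finset (Fin N) => s.Nonempty), p s = 1)
    (B : Fin N → Fin J → ℝ) (hB : ∀ m, IsPlacement K (B m))
    (m : Fin N) (btilde : Fin J → ℝ) (hbt : IsPlacement K btilde) :
    localMiss a p (Function.update B m btilde) m - localMiss a p B m =
      missProb a p (Function.update B m btilde) - missProb a p B :=
  content_placement_exact_potential_general N J a p B m btilde
end

section
/- The content placement game has a pure Nash equilibrium: any profile B* that minimizes the miss probability f over the (finite, nonempty) set of feasible profiles is a Nash equilibrium, i.e., for every cache m and every feasible alternative placement b̃^(m) one has f^(m)(b*^(m), b*^(−m)) ≤ f^(m)(b̃^(m), b*^(−m)). -/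
open Finset

/-!
The miss probability is an exact potential of the placement game. A user covered by cache `m`
misses file `j` iff `m` and every other cache covering the user miss it, so `f(B)` splits as
`f^(m)(B)` plus the contribution of the users that `m` does not cover, which does not depend on
`b^(m)`. Hence a unilateral deviation of `m` changes `f^(m)` and `f` by the same amount, and a
profitable deviation from a minimizer of `f` would decrease `f`.
-/

section Potential

variable {N J : ℕ} (a : Fin J → ℝ) (p : Finset (Fin N) → ℝ) (B : Fin N → Fin J → ℝ) (m : Fin N)

noncomputable def missProbOutside : ℝ :=
  ∑ j, a j * ∑ s ∈ univ.filter (fun s : Finset (Fin N) => s.Nonempty ∧ m ∉ s),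
    p s * ∏ ℓ ∈ s, (1 - B ℓ j)

lemma missProbOutside_update_self (b : Fin J → ℝ) :
    missProbOutside a p (Function.update B m b) m = missProbOutside a p B m := by
  unfold missProbOutside
  refine sum_congr rfl fun j _ => congrArg _ <| sum_congr rfl fun s hs => congrArg _ <|
    prod_congr rfl fun ℓ hℓ => ?_
  have hℓm : ℓ ≠ m := ne_of_mem_of_not_mem hℓ (mem_filter.mp hs).2.2
  rw [Function.update_of_ne hℓm]

lemma missProb_eq_missProbOutside_add_localMiss :
    missProb a p B = missProbOutside a p B m + localMiss a p B m := by
  unfold missProb missProbOutside localMiss qm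
  rw [← sum_add_distrib]
  refine sum_congr rfl fun j _ => ?_
  have hcovered : univ.filter (fun s : Finset (Fin N) => s.Nonempty ∧ m ∈ s)
      = univ.filter (fun s : Finset (Fin N) => m ∈ s) :=
    filter_congr fun s _ => ⟨And.right, fun hm => ⟨⟨m, hm⟩, hm⟩⟩
  have hfactor : ∑ s ∈ univ.filter (fun s : Finset (Fin N) => m ∈ s),
      p s * ∏ ℓ ∈ s, (1 - B ℓ j)
      = (1 - B m j) * ∑ s ∈ univ.filter (fun s : Finset (Fin N) => m ∈ s),
        p s * ∏ ℓ ∈ s.erase m, (1 - B ℓ j) := by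
    rw [mul_sum]
    refine sum_congr rfl fun s hs => ?_
    rw [← mul_prod_erase s _ (mem_filter.mp hs).2]
    ring
  have hsplit := sum_filter_add_sum_filter_not
    (univ.filter (fun s : Finset (Fin N) => s.Nonempty)) (fun s => m ∈ s)
    (fun s => p s * ∏ ℓ ∈ s, (1 - B ℓ j))
  rw [filter_filter, filter_filter, hcovered, hfactor] at hsplit
  rw [← hsplit]
  ring

lemma localMiss_update_sub (b : Fin J → ℝ) :
    localMiss a p (Function.update B m b) m - localMiss a p B m
      = missProb a p (Function.update B m b) - missProb a p B := by
  rw [missProb_eq_missProbOutside_add_localMiss a p _ m,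
    missProb_eq_missProbOutside_add_localMiss a p B m, missProbOutside_update_self]
  ring

end Potential

theorem global_min_is_nash_general (N J K : ℕ)
    (a : Fin J → ℝ) (p : Finset (Fin N) → ℝ)
    (Bstar : Fin N → Fin J → ℝ) (hfeas : ∀ m, IsPlacement K (Bstar m))
    (hmin : ∀ B : Fin N → Fin J → ℝ, (∀ m, IsPlacement K (B m)) →
      missProb a p Bstar ≤ missProb a p B) :
    ∀ m : Fin N, ∀ btilde : Fin J → ℝ, IsPlacement K btilde →
      localMiss a p Bstar m ≤ localMiss a p (Function.update Bstar m btilde) m := by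
  intro m btilde hb
  have hdeviation_feasible : ∀ ℓ, IsPlacement K (Function.update Bstar m btilde ℓ) :=
    (Function.forall_update_iff Bstar (p := fun _ => IsPlacement K)).2
      ⟨hb, fun ℓ _ => hfeas ℓ⟩
  have hpotential := localMiss_update_sub a p Bstar m btilde
  linarith [hmin _ hdeviation_feasible]

/-- any profile minimizing the miss probability over feasible profiles is a
pure Nash equilibrium of the content placement game. -/
theorem global_min_is_nash (N J K : ℕ) (hK1 : 1 ≤ K) (hKJ : K ≤ J)
    (a : Fin J → ℝ) (ha : ∀ j, 0 ≤ a j) (hasum : ∑ j, a j = 1)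
    (p : Finset (Fin N) → ℝ) (hp : ∀ s, 0 ≤ p s)
    (hpsum : ∑ s ∈ Finset.univ.filter (fun s : Finset (Fin N) => s.Nonempty), p s = 1)
    (Bstar : Fin N → Fin J → ℝ) (hfeas : ∀ m, IsPlacement K (Bstar m))
    (hmin : ∀ B : Fin N → Fin J → ℝ, (∀ m, IsPlacement K (B m)) →
      missProb a p Bstar ≤ missProb a p B) :
    ∀ m : Fin N, ∀ btilde : Fin J → ℝ, IsPlacement K btilde →
      localMiss a p Bstar m ≤ localMiss a p (Function.update Bstar m btilde) m :=
  global_min_is_nash_general N J K a p Bstar hfeas hmin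
end

section
/- Structure of Nash equilibria: let B̄ be a Nash equilibrium of the content placement game. Then for every cache m the placement b̄^(m) is a threshold placement with respect to the values a_j q̄_m(j), where q̄_m(j) = Σ_{s: m∈s} p_s Π_{ℓ∈s∖{m}}(1 − b̄^(ℓ)_j); equivalently, for every pair of files i, j with b̄^(m)_i = 1 and b̄^(m)_j = 0 one has a_i q̄_m(i) ≥ a_j q̄_m(j). -/
open Finset

/-!
Only the factor 1 - b^(m)_j of the local miss probability depends on the placement of cache m:
q_m(j) does not, so cache m minimises the linear cost Σ_j a_j q_m(j) (1 - b_j) over placements.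
Exchanging a stored file i for an unstored file j changes that cost by a_i q_m(i) - a_j q_m(j),
which therefore cannot be negative at an equilibrium.
-/

open Function

section Exchange

variable {ι : Type*} [DecidableEq ι]

lemma update_update_eq_sub_add_single {b : ι → ℝ} {i j : ι} (hij : i ≠ j)
    (hi : b i = 1) (hj : b j = 0) :
    update (update b i 0) j 1 = b - Pi.single i 1 + Pi.single j 1 := by
  funext k
  rcases eq_or_ne k j with rfl | hkj
  · simp [hj, hij.symm]
  rcases eq_or_ne k i with rfl | hki
  · simp [hi, hkj]
  · simp [hki, hkj]

variable [Fintype ι]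

lemma sum_mul_one_sub_sub_single_add_single (w b : ι → ℝ) (i j : ι) :
    ∑ k, w k * (1 - (b - Pi.single i 1 + Pi.single j 1 : ι → ℝ) k) =
      ∑ k, w k * (1 - b k) + w i - w j := by
  have hk : ∀ k, w k * (1 - (b - Pi.single i 1 + Pi.single j 1 : ι → ℝ) k) =
      w k * (1 - b k) + w k * (Pi.single i 1 : ι → ℝ) k - w k * (Pi.single j 1 : ι → ℝ) k :=
    fun k => by simp only [Pi.add_apply, Pi.sub_apply]; ring
  rw [Finset.sum_congr rfl fun k _ => hk k, Finset.sum_sub_distrib, Finset.sum_add_distrib]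
  simp [Pi.single_apply]

lemma sum_sub_single_add_single (b : ι → ℝ) (i j : ι) :
    ∑ k, (b - Pi.single i 1 + Pi.single j 1 : ι → ℝ) k = ∑ k, b k := by
  simp [Finset.sum_add_distrib, Finset.sum_sub_distrib]

end Exchange

def IsThresholdPlacement {J : ℕ} (w b : Fin J → ℝ) : Prop :=
  ∀ i j, b i = 1 → b j = 0 → w j ≤ w i

lemma IsPlacement.update_update {J K : ℕ} {b : Fin J → ℝ} (hb : IsPlacement K b) {i j : Fin J}
    (hij : i ≠ j) (hi : b i = 1) (hj : b j = 0) :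
    IsPlacement K (update (update b i 0) j 1) := by
  refine ⟨fun k => ?_, ?_⟩
  · rcases eq_or_ne k j with rfl | hkj
    · simp
    rcases eq_or_ne k i with rfl | hki
    · simp [hkj]
    · simpa [hki, hkj] using hb.1 k
  · rw [update_update_eq_sub_add_single hij hi hj, sum_sub_single_add_single]
    exact hb.2

lemma IsPlacement.isThresholdPlacement_of_isMinOn {J K : ℕ} {w b : Fin J → ℝ}
    (hb : IsPlacement K b)
    (hmin : IsMinOn (fun b' => ∑ k, w k * (1 - b' k)) {b' | IsPlacement K b'} b) :
    IsThresholdPlacement w b := by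
  intro i j hi hj
  have hij : i ≠ j := by rintro rfl; simp [hi] at hj
  have hexchange := isMinOn_iff.mp hmin _ (hb.update_update hij hi hj)
  rw [update_update_eq_sub_add_single hij hi hj, sum_mul_one_sub_sub_single_add_single] at hexchange
  linarith

lemma qm_update_self {N J : ℕ} (p : Finset (Fin N) → ℝ) (B : Fin N → Fin J → ℝ) (m : Fin N)
    (b : Fin J → ℝ) (j : Fin J) :
    qm p (update B m b) m j = qm p B m j := by
  refine Finset.sum_congr rfl fun s _ => congrArg _ (Finset.prod_congr rfl fun ℓ hℓ => ?_)
  rw [update_of_ne (Finset.ne_of_mem_erase hℓ)]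

lemma localMiss_eq_sum {N J : ℕ} (a : Fin J → ℝ) (p : Finset (Fin N) → ℝ)
    (B : Fin N → Fin J → ℝ) (m : Fin N) :
    localMiss a p B m = ∑ j, a j * qm p B m j * (1 - B m j) :=
  Finset.sum_congr rfl fun _ _ => by ring

lemma localMiss_update_self {N J : ℕ} (a : Fin J → ℝ) (p : Finset (Fin N) → ℝ)
    (B : Fin N → Fin J → ℝ) (m : Fin N) (b : Fin J → ℝ) :
    localMiss a p (update B m b) m = ∑ j, a j * qm p B m j * (1 - b j) := by
  simp only [localMiss_eq_sum, update_self, qm_update_self]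

theorem nash_equilibrium_threshold_structure_general (N J K : ℕ) (a : Fin J → ℝ)
    (p : Finset (Fin N) → ℝ) (Bbar : Fin N → Fin J → ℝ) (hfeas : ∀ m, IsPlacement K (Bbar m))
    (hNE : ∀ m : Fin N, ∀ btilde : Fin J → ℝ, IsPlacement K btilde →
      localMiss a p Bbar m ≤ localMiss a p (Function.update Bbar m btilde) m) :
    ∀ m : Fin N, ∀ i j : Fin J, Bbar m i = 1 → Bbar m j = 0 →
      a j * qm p Bbar m j ≤ a i * qm p Bbar m i := by
  intro m
  refine (hfeas m).isThresholdPlacement_of_isMinOn (isMinOn_iff.mpr fun b hb => ?_)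
  have hdeviation := hNE m b hb
  rwa [localMiss_update_self, localMiss_eq_sum] at hdeviation

/-- at a Nash equilibrium every cache stores a threshold placement: any stored
file i and unstored file j satisfy a_i q_m(i) ≥ a_j q_m(j). -/
theorem nash_equilibrium_threshold_structure (N J K : ℕ) (hK1 : 1 ≤ K) (hKJ : K ≤ J)
    (a : Fin J → ℝ) (ha : ∀ j, 0 ≤ a j) (hasum : ∑ j, a j = 1)
    (p : Finset (Fin N) → ℝ) (hp : ∀ s, 0 ≤ p s)
    (hpsum : ∑ s ∈ Finset.univ.filter (fun s : Finset (Fin N) => s.Nonempty), p s = 1)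
    (Bbar : Fin N → Fin J → ℝ) (hfeas : ∀ m, IsPlacement K (Bbar m))
    (hNE : ∀ m : Fin N, ∀ btilde : Fin J → ℝ, IsPlacement K btilde →
      localMiss a p Bbar m ≤ localMiss a p (Function.update Bbar m btilde) m) :
    ∀ m : Fin N, ∀ i j : Fin J, Bbar m i = 1 → Bbar m j = 0 →
      a j * qm p Bbar m j ≤ a i * qm p Bbar m i :=
  nash_equilibrium_threshold_structure_general N J K a p Bbar hfeas hNE
end

section
/- Round-robin convergence bound: let ε > 0 and let (B_t)_{t≥0} be a sequence of feasible profiles such that, for each t ≥ 0, B_{t+1} differs from B_t at most in the placement of cache m_t = (t mod N) + 1, the new placement b^(m_t) of B_{t+1} minimizes f^(m_t)(·, B_t^(−m_t)) over feasible placements, and B_{t+1} = B_t whenever the placement of cache m_t in B_t is already such a minimizer. Assume that every strict decrease of f along the sequence is at least ε. Then there exists T ≤ N·(⌈1/ε⌉ + 1) such that B_T is a Nash equilibrium. -/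
open Finset

/-- The cache scheduled at time t under round-robin scheduling (cache (t mod N) + 1 in
1-based numbering, i.e. index t mod N in Fin N). -/
def rrCache (N : ℕ) (hN : 0 < N) (t : ℕ) : Fin N := ⟨t % N, Nat.mod_lt t hN⟩

/-!
The miss probability `f` is an exact potential for the caching game: if two profiles differ
only at cache `m`, their miss probabilities differ exactly as the local miss probabilities of
`m` do. Hence every best-response update leaves `f` unchanged or lowers it by at least `ε`, and
since `f` takes values in `[0, 1]` it cannot drop in each of the `⌈1/ε⌉ + 1` round-robin rounds.
In a round where `f` never drops, every scheduled cache is already best-responding, so by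
laziness the profile is frozen for the whole round, during which every cache is checked once:
the profile at the start of that round is a Nash equilibrium.
-/

section Potential

variable {N J : ℕ} (a : Fin J → ℝ) (p : Finset (Fin N) → ℝ)

theorem missProb_eq_localMiss_add (B : Fin N → Fin J → ℝ) (m : Fin N) :
    missProb a p B = localMiss a p B m +
      ∑ j, a j * ∑ s ∈ univ.filter (fun s : Finset (Fin N) => s.Nonempty ∧ m ∉ s),
        p s * ∏ ℓ ∈ s, (1 - B ℓ j) := by
  unfold missProb localMiss qm
  rw [← sum_add_distrib]
  refine sum_congr rfl fun j _ => ?_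
  have hcontaining : (univ.filter fun s : Finset (Fin N) => s.Nonempty).filter (m ∈ ·) =
      univ.filter (m ∈ ·) := by
    ext s
    simp only [mem_filter, mem_univ, true_and, and_iff_right_iff_imp]
    exact fun hm => ⟨m, hm⟩
  have hfactor : ∀ s ∈ univ.filter (fun s : Finset (Fin N) => m ∈ s),
      p s * ∏ ℓ ∈ s, (1 - B ℓ j) = (1 - B m j) * (p s * ∏ ℓ ∈ s.erase m, (1 - B ℓ j)) := by
    intro s hs
    rw [← mul_prod_erase s _ (mem_filter.1 hs).2]
    ring
  rw [← sum_filter_add_sum_filter_not _ (m ∈ ·), hcontaining, filter_filter,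
    sum_congr rfl hfactor, ← mul_sum, mul_add, mul_assoc]

theorem missProb_sub_eq_localMiss_sub {B B' : Fin N → Fin J → ℝ} {m : Fin N}
    (h : ∀ ℓ, ℓ ≠ m → B ℓ = B' ℓ) :
    missProb a p B - missProb a p B' = localMiss a p B m - localMiss a p B' m := by
  have hrest : ∀ j, ∀ s ∈ univ.filter (fun s : Finset (Fin N) => s.Nonempty ∧ m ∉ s),
      p s * ∏ ℓ ∈ s, (1 - B ℓ j) = p s * ∏ ℓ ∈ s, (1 - B' ℓ j) := by
    intro j s hs
    rw [prod_congr rfl fun ℓ hℓ => by rw [h ℓ (ne_of_mem_of_not_mem hℓ (mem_filter.1 hs).2.2)]]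
  rw [missProb_eq_localMiss_add a p B m, missProb_eq_localMiss_add a p B' m]
  simp only [fun j => sum_congr rfl (hrest j)]
  ring

theorem missProb_nonneg (ha : ∀ j, 0 ≤ a j) (hp : ∀ s, 0 ≤ p s) {B : Fin N → Fin J → ℝ}
    (hB : ∀ ℓ j, B ℓ j ≤ 1) : 0 ≤ missProb a p B :=
  sum_nonneg fun j _ => mul_nonneg (ha j) <| sum_nonneg fun s _ =>
    mul_nonneg (hp s) <| prod_nonneg fun ℓ _ => sub_nonneg.2 (hB ℓ j)

theorem missProb_le_one (ha : ∀ j, 0 ≤ a j) (hasum : ∑ j, a j = 1) (hp : ∀ s, 0 ≤ p s)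
    (hpsum : ∑ s ∈ univ.filter (fun s : Finset (Fin N) => s.Nonempty), p s = 1)
    {B : Fin N → Fin J → ℝ} (hB : ∀ ℓ j, B ℓ j ∈ Set.Icc (0 : ℝ) 1) :
    missProb a p B ≤ 1 := by
  have hprod : ∀ s j, ∏ ℓ ∈ s, (1 - B ℓ j) ≤ 1 := fun s j =>
    prod_le_one (fun ℓ _ => sub_nonneg.2 (hB ℓ j).2) fun ℓ _ => sub_le_self 1 (hB ℓ j).1
  calc missProb a p B
      ≤ ∑ j, a j * ∑ s ∈ univ.filter (fun s : Finset (Fin N) => s.Nonempty), p s := by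
        refine sum_le_sum fun j _ => mul_le_mul_of_nonneg_left ?_ (ha j)
        exact sum_le_sum fun s _ => mul_le_of_le_one_right (hp s) (hprod s j)
    _ = 1 := by simp [hpsum, hasum]

end Potential

theorem IsPlacement.mem_Icc {J K : ℕ} {b : Fin J → ℝ} (hb : IsPlacement K b) (j : Fin J) :
    b j ∈ Set.Icc (0 : ℝ) 1 := by
  rcases hb.1 j with h | h <;> simp [h]

section BestResponse

variable {N J : ℕ} (a : Fin J → ℝ) (p : Finset (Fin N) → ℝ) (K : ℕ)

def IsBestResponse (B : Fin N → Fin J → ℝ) (m : Fin N) : Prop :=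
  ∀ b, IsPlacement K b → localMiss a p B m ≤ localMiss a p (Function.update B m b) m

variable {a p K}

theorem update_eq_update_of_eqOn_ne {α β : Type*} [DecidableEq α] {B B' : α → β} {m : α}
    (h : ∀ ℓ, ℓ ≠ m → B ℓ = B' ℓ) (b : β) :
    Function.update B m b = Function.update B' m b :=
  Function.update_eq_iff.2
    ⟨(Function.update_self m b B').symm, fun ℓ hℓ => by rw [Function.update_of_ne hℓ, h ℓ hℓ]⟩

theorem missProb_le_of_isBestResponse {B B' : Fin N → Fin J → ℝ} {m : Fin N}
    (h : ∀ ℓ, ℓ ≠ m → B' ℓ = B ℓ) (hB' : IsBestResponse a p K B' m)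
    (hBm : IsPlacement K (B m)) : missProb a p B' ≤ missProb a p B := by
  have hlocal := hB' (B m) hBm
  rw [update_eq_update_of_eqOn_ne h, Function.update_eq_self] at hlocal
  linarith [missProb_sub_eq_localMiss_sub a p h]

theorem IsBestResponse.of_missProb_eq {B B' : Fin N → Fin J → ℝ} {m : Fin N}
    (h : ∀ ℓ, ℓ ≠ m → B' ℓ = B ℓ) (hB' : IsBestResponse a p K B' m)
    (heq : missProb a p B' = missProb a p B) : IsBestResponse a p K B m := by
  intro b hb
  have hlocal : localMiss a p B' m = localMiss a p B m := by
    linarith [missProb_sub_eq_localMiss_sub a p h]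
  rw [← hlocal, ← update_eq_update_of_eqOn_ne h]
  exact hB' b hb

end BestResponse

theorem le_sub_mul_of_forall_succ_le_sub {g : ℕ → ℝ} {ε : ℝ} {n : ℕ}
    (h : ∀ i < n, g (i + 1) ≤ g i - ε) : g n ≤ g 0 - n * ε := by
  induction n with
  | zero => simp
  | succ n ih =>
    have := h n n.lt_succ_self
    have := ih fun i hi => h i (hi.trans n.lt_succ_self)
    push_cast
    linarith

theorem le_sub_of_antitone_of_strict_drop {f : ℕ → ℝ} {ε : ℝ} (hf : Antitone f)
    (hstep : ∀ t, f (t + 1) < f t → ε ≤ f t - f (t + 1)) {s t u : ℕ} (hst : s ≤ t)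
    (htu : t < u) (hdrop : f (t + 1) ≠ f t) : f u ≤ f s - ε := by
  have := hstep t (lt_of_le_of_ne (hf t.le_succ) hdrop)
  linarith [hf hst, hf (Nat.succ_le_of_lt htu)]

theorem exists_flat_block_of_antitone {f : ℕ → ℝ} {ε : ℝ} (N : ℕ) (hε : 0 < ε)
    (hf : Antitone f) (hstep : ∀ t, f (t + 1) < f t → ε ≤ f t - f (t + 1))
    (h0 : f 0 ≤ 1) (hnonneg : ∀ t, 0 ≤ f t) :
    ∃ i ≤ ⌈1 / ε⌉₊, ∀ t, i * N ≤ t → t < i * N + N → f (t + 1) = f t := by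
  set C := ⌈1 / ε⌉₊
  by_contra! hdrops
  have hround : ∀ i < C + 1, f ((i + 1) * N) ≤ f (i * N) - ε := by
    intro i hi
    obtain ⟨t, hst, htu, hdrop⟩ := hdrops i (Nat.lt_succ_iff.1 hi)
    exact le_sub_of_antitone_of_strict_drop hf hstep hst (by rwa [add_one_mul]) hdrop
  have htotal := le_sub_mul_of_forall_succ_le_sub (g := fun i => f (i * N)) hround
  have hCε : 1 ≤ (C : ℝ) * ε := (div_le_iff₀ hε).1 (Nat.le_ceil (1 / ε))
  rw [zero_mul] at htotal
  push_cast at htotal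
  linarith [hnonneg ((C + 1) * N)]

theorem eq_of_forall_succ_eq {α : Type*} {g : ℕ → α} {s n : ℕ}
    (h : ∀ t, s ≤ t → t < s + n → g (t + 1) = g t) : ∀ k ≤ n, g (s + k) = g s := by
  intro k
  induction k with
  | zero => simp
  | succ k ih =>
    intro hk
    rw [← add_assoc, h (s + k) (by omega) (by omega), ih (by omega)]

theorem rrCache_mul_add {N : ℕ} (hN : 0 < N) (i : ℕ) (m : Fin N) :
    rrCache N hN (i * N + m) = m :=
  Fin.ext <| by simp [rrCache, Nat.mul_add_mod_self_right, Nat.mod_eq_of_lt m.isLt]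

theorem round_robin_convergence_general (N J K : ℕ) (hN : 0 < N)
    (a : Fin J → ℝ) (ha : ∀ j, 0 ≤ a j) (hasum : ∑ j, a j = 1)
    (p : Finset (Fin N) → ℝ) (hp : ∀ s, 0 ≤ p s)
    (hpsum : ∑ s ∈ Finset.univ.filter (fun s : Finset (Fin N) => s.Nonempty), p s = 1)
    (ε : ℝ) (hε : 0 < ε)
    (B : ℕ → Fin N → Fin J → ℝ)
    (hfeas : ∀ t m, IsPlacement K (B t m))
    (hupd : ∀ t, ∀ ℓ, ℓ ≠ rrCache N hN t → B (t + 1) ℓ = B t ℓ)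
    (hbr : ∀ t, ∀ btilde : Fin J → ℝ, IsPlacement K btilde →
      localMiss a p (B (t + 1)) (rrCache N hN t) ≤
        localMiss a p (Function.update (B t) (rrCache N hN t) btilde) (rrCache N hN t))
    (hlazy : ∀ t, (∀ btilde : Fin J → ℝ, IsPlacement K btilde →
        localMiss a p (B t) (rrCache N hN t) ≤
          localMiss a p (Function.update (B t) (rrCache N hN t) btilde) (rrCache N hN t)) →
      B (t + 1) = B t)
    (hstep : ∀ t, missProb a p (B (t + 1)) < missProb a p (B t) →
      ε ≤ missProb a p (B t) - missProb a p (B (t + 1))) :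
    ∃ T ≤ N * (⌈1 / ε⌉₊ + 1), ∀ m : Fin N, ∀ btilde : Fin J → ℝ, IsPlacement K btilde →
      localMiss a p (B T) m ≤ localMiss a p (Function.update (B T) m btilde) m := by
  have hresponse (t : ℕ) : IsBestResponse a p K (B (t + 1)) (rrCache N hN t) := fun b hb => by
    rw [update_eq_update_of_eqOn_ne (hupd t) b]
    exact hbr t b hb
  have hanti : Antitone fun t => missProb a p (B t) := antitone_nat_of_succ_le fun t =>
    missProb_le_of_isBestResponse (hupd t) (hresponse t) (hfeas t _)
  obtain ⟨i, hiC, hflat⟩ := exists_flat_block_of_antitone N hε hanti hstep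
    (missProb_le_one a p ha hasum hp hpsum fun ℓ => (hfeas 0 ℓ).mem_Icc)
    (fun t => missProb_nonneg a p ha hp fun ℓ j => ((hfeas t ℓ).mem_Icc j).2)
  have hstable (t : ℕ) (h₁ : i * N ≤ t) (h₂ : t < i * N + N) :
      IsBestResponse a p K (B t) (rrCache N hN t) :=
    (hresponse t).of_missProb_eq (hupd t) (hflat t h₁ h₂)
  have hfrozen := eq_of_forall_succ_eq fun t h₁ h₂ => hlazy t (hstable t h₁ h₂)
  refine ⟨i * N, by rw [mul_comm]; exact Nat.mul_le_mul_left N (by omega), fun m => ?_⟩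
  have := hstable (i * N + m) (by omega) (by omega)
  rwa [rrCache_mul_add, hfrozen m m.isLt.le] at this

/-- round-robin best response dynamics, with lazy updates and all strict
decreases of the miss probability at least ε, reaches a Nash equilibrium within
N·(⌈1/ε⌉ + 1) steps. -/
theorem round_robin_convergence (N J K : ℕ) (hN : 0 < N) (hK1 : 1 ≤ K) (hKJ : K ≤ J)
    (a : Fin J → ℝ) (ha : ∀ j, 0 ≤ a j) (hasum : ∑ j, a j = 1)
    (p : Finset (Fin N) → ℝ) (hp : ∀ s, 0 ≤ p s)
    (hpsum : ∑ s ∈ Finset.univ.filter (fun s : Finset (Fin N) => s.Nonempty), p s = 1)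
    (ε : ℝ) (hε : 0 < ε)
    (B : ℕ → Fin N → Fin J → ℝ)
    (hfeas : ∀ t m, IsPlacement K (B t m))
    (hupd : ∀ t, ∀ ℓ, ℓ ≠ rrCache N hN t → B (t + 1) ℓ = B t ℓ)
    (hbr : ∀ t, ∀ btilde : Fin J → ℝ, IsPlacement K btilde →
      localMiss a p (B (t + 1)) (rrCache N hN t) ≤
        localMiss a p (Function.update (B t) (rrCache N hN t) btilde) (rrCache N hN t))
    (hlazy : ∀ t, (∀ btilde : Fin J → ℝ, IsPlacement K btilde →
        localMiss a p (B t) (rrCache N hN t) ≤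
          localMiss a p (Function.update (B t) (rrCache N hN t) btilde) (rrCache N hN t)) →
      B (t + 1) = B t)
    (hstep : ∀ t, missProb a p (B (t + 1)) < missProb a p (B t) →
      ε ≤ missProb a p (B t) - missProb a p (B (t + 1))) :
    ∃ T ≤ N * (⌈1 / ε⌉₊ + 1), ∀ m : Fin N, ∀ btilde : Fin J → ℝ, IsPlacement K btilde →
      localMiss a p (B T) m ≤ localMiss a p (Function.update (B T) m btilde) m :=
  round_robin_convergence_general N J K hN a ha hasum p hp hpsum ε hε B hfeas hupd hbr hlazy hstep
end
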